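/- arXiv:2206.05794 — 4 statements merged into one kernel-verified Lean document; each statement's English description precedes it below -/
import Mathlib

section
/- Fix natural numbers n, m, N, B ≥ 1 and reals μ > 0, λ > 0 with 1 − 2μλ ≥ 0. For each step s ∈ ℕ, each i ∈ {1,…,B} and t ∈ {1,…,N}, let a_{s,i,t} ∈ ℝⁿ, b_{s,i,t} ∈ ℝᵐ, and let φ_{s,i} : ℝ → ℝ be differentiable; define the mini-batch loss L_s : ℝ^{n×m} → ℝ by L_s(W) = (1/B) · Σ_{i=1}^{B} φ_{s,i}( Σ_{t=1}^{N} ⟨a_{s,i,t}, W b_{s,i,t}⟩ ). Let (W_s)_{s∈ℕ} be a sequence of n×m real matrices satisfying the SGD-with-weight-decay update W_{s+1} = W_s − μ·(∇L_s(W_s) + 2λ·W_s) for all s. Then each L_s is differentiable, and for every t ∈ ℕ and every k ≤ t there exists an n×m real matrix M with rank(M) ≤ N·B·k and ‖W_t − M‖_F ≤ (1 − 2μλ)^k · ‖W_{t−k}‖_F. -/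
/-- The Frobenius norm of an n×m real matrix. -/
noncomputable def frobNorm {n m : ℕ} (A : Matrix (Fin n) (Fin m) ℝ) : ℝ :=
  Real.sqrt (∑ i, ∑ j, (A i j) ^ 2)

/-- The gradient matrix of `f : ℝ^{n×m} → ℝ` at `W₀`: its `(i,j)` entry is the Fréchet
derivative of `f` at `W₀` evaluated at the matrix unit `E_{i,j}`. -/
noncomputable def gradMatrix {n m : ℕ} (f : (Fin n → Fin m → ℝ) → ℝ)
    (W₀ : Fin n → Fin m → ℝ) : Matrix (Fin n) (Fin m) ℝ :=
  Matrix.of fun i j => fderiv ℝ f W₀ (fun i' j' => if i' = i ∧ j' = j then 1 else 0)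

lemma rank_add_le' {n m : ℕ} (A C : Matrix (Fin n) (Fin m) ℝ) :
    (A + C).rank ≤ A.rank + C.rank := by
  classical
  have h : LinearMap.range (A + C).mulVecLin ≤
      LinearMap.range A.mulVecLin ⊔ LinearMap.range C.mulVecLin := by
    rintro x ⟨v, rfl⟩
    exact Submodule.mem_sup.2 ⟨A.mulVecLin v, ⟨v, rfl⟩, C.mulVecLin v, ⟨v, rfl⟩, by
      simp [Matrix.add_mulVec, Matrix.mulVecLin]⟩
  calc (A + C).rank ≤ Module.finrank ℝ
        (LinearMap.range A.mulVecLin ⊔ LinearMap.range C.mulVecLin : Submodule ℝ (Fin n → ℝ)) :=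
        Submodule.finrank_mono h
    _ ≤ A.rank + C.rank := Submodule.finrank_add_le_finrank_add_finrank _ _

lemma rank_smul_le' {n m : ℕ} (c : ℝ) (A : Matrix (Fin n) (Fin m) ℝ) :
    (c • A).rank ≤ A.rank := by
  have h : LinearMap.range (c • A).mulVecLin ≤ LinearMap.range A.mulVecLin := by
    rintro x ⟨v, rfl⟩
    exact ⟨c • v, by simp [Matrix.mulVecLin, Matrix.smul_mulVec, Matrix.mulVec_smul]⟩
  exact Submodule.finrank_mono h

lemma rank_vecMulVec_le' {n m : ℕ} (u : Fin n → ℝ) (v : Fin m → ℝ) :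
    (Matrix.vecMulVec u v).rank ≤ 1 := by
  rw [Matrix.vecMulVec_eq (Fin 1)]
  exact (Matrix.rank_mul_le_left _ _).trans ((Matrix.rank_le_card_width _).trans (by simp))

lemma rank_sum_le' {n m : ℕ} {ι : Type*} (s : Finset ι) (f : ι → Matrix (Fin n) (Fin m) ℝ) :
    (∑ x ∈ s, f x).rank ≤ ∑ x ∈ s, (f x).rank := by
  classical
  induction s using Finset.induction with
  | empty => simp
  | insert _ _ h ih =>
    rw [Finset.sum_insert h, Finset.sum_insert h]
    exact (rank_add_le' _ _).trans (by gcongr)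

lemma frobNorm_smul {n m : ℕ} (c : ℝ) (A : Matrix (Fin n) (Fin m) ℝ) :
    frobNorm (c • A) = |c| * frobNorm A := by
  unfold frobNorm
  rw [← Real.sqrt_sq_eq_abs, ← Real.sqrt_mul (sq_nonneg c)]
  congr 1
  simp [Finset.mul_sum, mul_pow]

noncomputable def ellCLM {n m N : ℕ} (a : Fin N → Fin n → ℝ) (b : Fin N → Fin m → ℝ) :
    (Fin n → Fin m → ℝ) →L[ℝ] ℝ :=
  LinearMap.toContinuousLinearMap
  { toFun := fun W => ∑ t, ∑ p, a t p * ∑ q, W p q * b t q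
    map_add' := by
      intro x y
      simp [add_mul, mul_add, Finset.sum_add_distrib]
    map_smul' := by
      intro c x
      simp [Finset.mul_sum, smul_eq_mul]
      ring_nf
      congr 1; ext t; congr 1; ext p; congr 1; ext q; ring }

lemma ellCLM_apply {n m N : ℕ} (a : Fin N → Fin n → ℝ) (b : Fin N → Fin m → ℝ)
    (W : Fin n → Fin m → ℝ) :
    ellCLM a b W = ∑ t, ∑ p, a t p * ∑ q, W p q * b t q := rfl

lemma ellCLM_unit {n m N : ℕ} (a : Fin N → Fin n → ℝ) (b : Fin N → Fin m → ℝ)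
    (i : Fin n) (j : Fin m) :
    ellCLM a b (fun i' j' => if i' = i ∧ j' = j then 1 else 0) = ∑ t, a t i * b t j := by
  rw [ellCLM_apply]
  congr 1; ext t
  rw [Finset.sum_eq_single i]
  · simp
  · intro p _ hp
    simp [hp]
  · simp

/-- mini-batch SGD with weight decay on losses of the form
`L_s(W) = (1/B)·Σ_{i=1}^{B} φ_{s,i}(Σ_{t=1}^{N} ⟨a_{s,i,t}, W b_{s,i,t}⟩)` — each `L_s` is
differentiable, and for every `t` and `k ≤ t` there is a matrix `M` with
`rank(M) ≤ N·B·k` and `‖W_t − M‖_F ≤ (1 − 2μλ)^k · ‖W_{t−k}‖_F`. -/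
theorem stmt0 {n m N B : ℕ} (hB : 1 ≤ B) (μ lam : ℝ) (hμ : 0 < μ) (hlam : 0 < lam)
    (hμlam : 1 - 2 * μ * lam ≥ 0)
    (a : ℕ → Fin B → Fin N → Fin n → ℝ)
    (b : ℕ → Fin B → Fin N → Fin m → ℝ)
    (φ : ℕ → Fin B → ℝ → ℝ) (hφ : ∀ s i, Differentiable ℝ (φ s i))
    (L : ℕ → (Fin n → Fin m → ℝ) → ℝ)
    (hL : ∀ s W, L s W =
      (1 / (B : ℝ)) * ∑ i, φ s i (∑ t, ∑ p, a s i t p * ∑ q, W p q * b s i t q))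
    (W : ℕ → Matrix (Fin n) (Fin m) ℝ)
    (hW : ∀ s, W (s + 1) = W s - μ • (gradMatrix (L s) (W s) + (2 * lam) • W s)) :
    (∀ s, Differentiable ℝ (L s)) ∧
      ∀ t k : ℕ, k ≤ t →
        ∃ M : Matrix (Fin n) (Fin m) ℝ, M.rank ≤ N * B * k ∧
          frobNorm (W t - M) ≤ (1 - 2 * μ * lam) ^ k * frobNorm (W (t - k)) := by
  classical
  -- the derivative of each L s
  have hHas : ∀ s (W₀ : Fin n → Fin m → ℝ), HasFDerivAt (L s)
      ((1 / (B : ℝ)) • ∑ ib : Fin B,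
        (deriv (φ s ib) (ellCLM (a s ib) (b s ib) W₀)) • (ellCLM (a s ib) (b s ib))) W₀ := by
    intro s W₀
    have hLs : L s = fun W => (1 / (B : ℝ)) * ∑ ib, φ s ib (ellCLM (a s ib) (b s ib) W) := by
      funext W; rw [hL s W]; simp only [ellCLM_apply]
    rw [hLs]
    have h1 : ∀ ib ∈ (Finset.univ : Finset (Fin B)),
        HasFDerivAt (fun W => φ s ib (ellCLM (a s ib) (b s ib) W))
          ((deriv (φ s ib) (ellCLM (a s ib) (b s ib) W₀)) • (ellCLM (a s ib) (b s ib))) W₀ :=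
      fun ib _ => ((hφ s ib _).hasDerivAt).comp_hasFDerivAt W₀
        ((ellCLM (a s ib) (b s ib)).hasFDerivAt)
    exact (HasFDerivAt.fun_sum h1).const_mul _
  have hdiff : ∀ s, Differentiable ℝ (L s) := fun s W₀ => (hHas s W₀).differentiableAt
  refine ⟨hdiff, ?_⟩
  -- gradient has rank ≤ N * B
  have hgrad : ∀ s W₀, (gradMatrix (L s) W₀).rank ≤ N * B := by
    intro s W₀
    have hform : gradMatrix (L s) W₀ = ∑ ib : Fin B, ∑ t : Fin N,
        Matrix.vecMulVec
          (((1 / (B : ℝ)) * deriv (φ s ib) (ellCLM (a s ib) (b s ib) W₀)) • a s ib t)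
          (b s ib t) := by
      ext i j
      have hf := (hHas s W₀).fderiv
      simp only [gradMatrix, Matrix.of_apply, hf]
      rw [ContinuousLinearMap.smul_apply, ContinuousLinearMap.sum_apply]
      simp only [ContinuousLinearMap.smul_apply, ellCLM_unit, smul_eq_mul,
        Finset.sum_apply, Matrix.sum_apply, Matrix.vecMulVec_apply, Pi.smul_apply]
      rw [Finset.mul_sum]
      refine Finset.sum_congr rfl fun ib _ => ?_
      rw [Finset.mul_sum, Finset.mul_sum]
      refine Finset.sum_congr rfl fun t _ => ?_
      ring
    rw [hform]
    calc (∑ ib : Fin B, ∑ t : Fin N, Matrix.vecMulVec _ (b s ib t)).rank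
        ≤ ∑ ib : Fin B, (∑ t : Fin N, Matrix.vecMulVec
          (((1 / (B : ℝ)) * deriv (φ s ib) (ellCLM (a s ib) (b s ib) W₀)) • a s ib t)
          (b s ib t)).rank := rank_sum_le' _ _
      _ ≤ ∑ ib : Fin B, ∑ t : Fin N, 1 := by
          gcongr with ib _
          exact (rank_sum_le' _ _).trans (by
            gcongr with t _
            exact rank_vecMulVec_le' _ _)
      _ = N * B := by simp [mul_comm]
  -- main induction
  have key : ∀ k t : ℕ, k ≤ t → ∃ M : Matrix (Fin n) (Fin m) ℝ, M.rank ≤ N * B * k ∧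
      W t - M = ((1 - 2 * μ * lam) ^ k) • W (t - k) := by
    intro k
    induction k with
    | zero => intro t _; exact ⟨0, by simp, by simp⟩
    | succ k ih =>
      intro t ht
      obtain ⟨u, rfl⟩ : ∃ u, t = u + 1 := ⟨t - 1, by omega⟩
      obtain ⟨M, hrk, heq⟩ := ih u (by omega)
      refine ⟨(1 - 2 * μ * lam) • M - μ • gradMatrix (L u) (W u), ?_, ?_⟩
      · calc ((1 - 2 * μ * lam) • M - μ • gradMatrix (L u) (W u)).rank
            = ((1 - 2 * μ * lam) • M + (-μ) • gradMatrix (L u) (W u)).rank := by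
              rw [sub_eq_add_neg, ← neg_smul]
          _ ≤ ((1 - 2 * μ * lam) • M).rank + ((-μ) • gradMatrix (L u) (W u)).rank :=
              rank_add_le' _ _
          _ ≤ M.rank + (gradMatrix (L u) (W u)).rank := by
              gcongr <;> [exact rank_smul_le' _ _; exact rank_smul_le' _ _]
          _ ≤ N * B * k + N * B := by gcongr; exact hgrad u (W u)
          _ = N * B * (k + 1) := by ring
      · have hstep : W (u + 1) = (1 - 2 * μ * lam) • W u - μ • gradMatrix (L u) (W u) := by
          rw [hW u]; module
        have : W (u + 1) - ((1 - 2 * μ * lam) • M - μ • gradMatrix (L u) (W u))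
            = (1 - 2 * μ * lam) • (W u - M) := by
          rw [hstep]; module
        have hidx : u + 1 - (k + 1) = u - k := by omega
        rw [this, heq, smul_smul, ← pow_succ', hidx]
  intro t k hk
  obtain ⟨M, hrk, heq⟩ := key k t hk
  refine ⟨M, hrk, ?_⟩
  rw [heq, frobNorm_smul, abs_of_nonneg (pow_nonneg hμlam k)]
end

section
/- Fix x ∈ ℝ^{d₁}, a d₃×d₂ real matrix W₂, and v ∈ ℝ^{d₃}, and define f on d₂×d₁ real matrices by f(W) = ⟨v, relu(W₂ · relu(W x))⟩, the output of a three-layer ReLU network in the first-layer weights. If W₀ satisfies (W₀ x)_j ≠ 0 for every j ∈ {1,…,d₂} and (W₂ · relu(W₀ x))_i ≠ 0 for every i ∈ {1,…,d₃}, then f is differentiable at W₀ and rank(∇f(W₀)) ≤ 1. -/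
/-!
Near `W₀` no hidden or output unit changes sign, so every `relu` in the network agrees with
multiplication by a fixed `0`/`1` slope. Hence `f` coincides near `W₀` with the linear map
`W ↦ ⟨δ xᵀ, W⟩`, where `δ` is the backpropagated error; `f` is differentiable at `W₀` with
gradient matrix the outer product `δ xᵀ`, which has rank at most one.
-/

/-- The ReLU function on the reals. -/
def relu (z : ℝ) : ℝ := max z 0

open Filter Topology

@[fun_prop]
theorem continuous_relu : Continuous relu :=
  continuous_id.max continuous_const

/-- The derivative of `relu` away from `0`; its value `0` at `0` is a convention. -/
noncomputable def reluDeriv (z : ℝ) : ℝ := if 0 < z then 1 else 0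

theorem relu_eventuallyEq_of_ne_zero {z : ℝ} (hz : z ≠ 0) :
    relu =ᶠ[𝓝 z] fun y => reluDeriv z * y := by
  rcases hz.lt_or_gt with hneg | hpos
  · filter_upwards [gt_mem_nhds hneg] with y hy
    simp [relu, reluDeriv, hy.le, hneg.not_gt]
  · filter_upwards [lt_mem_nhds hpos] with y hy
    simp [relu, reluDeriv, hy.le, hpos]

theorem relu_comp_eventuallyEq {X : Type*} [TopologicalSpace X] {g : X → ℝ} {a : X}
    (hg : ContinuousAt g a) (ha : g a ≠ 0) :
    (fun y => relu (g y)) =ᶠ[𝓝 a] fun y => reluDeriv (g a) * g y :=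
  (relu_eventuallyEq_of_ne_zero ha).comp_tendsto hg

section Pairing

variable {ι κ : Type*} [Fintype ι] [Fintype κ]

noncomputable def matrixPairing (A : Matrix ι κ ℝ) : (ι → κ → ℝ) →L[ℝ] ℝ :=
  ∑ i, ∑ j, A i j •
    (ContinuousLinearMap.proj j : (κ → ℝ) →L[ℝ] ℝ).comp (ContinuousLinearMap.proj i)

@[simp]
theorem matrixPairing_apply (A : Matrix ι κ ℝ) (W : ι → κ → ℝ) :
    matrixPairing A W = ∑ i, ∑ j, A i j * W i j := by
  simp [matrixPairing]

end Pairing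

theorem gradMatrix_eq_of_hasFDerivAt {n m : ℕ} {f : (Fin n → Fin m → ℝ) → ℝ}
    {W₀ : Fin n → Fin m → ℝ} {A : Matrix (Fin n) (Fin m) ℝ}
    (hf : HasFDerivAt f (matrixPairing A) W₀) : gradMatrix f W₀ = A := by
  ext i j
  simp [gradMatrix, hf.fderiv, ite_and]

noncomputable def threeLayerNet {d₁ d₂ d₃ : ℕ} (x : Fin d₁ → ℝ)
    (W₂ : Matrix (Fin d₃) (Fin d₂) ℝ) (v : Fin d₃ → ℝ) (W : Fin d₂ → Fin d₁ → ℝ) : ℝ :=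
  ∑ i, v i * relu (∑ j, W₂ i j * relu (∑ l, W j l * x l))

section Network

variable {d₁ d₂ d₃ : ℕ} (x : Fin d₁ → ℝ) (W₂ : Matrix (Fin d₃) (Fin d₂) ℝ) (v : Fin d₃ → ℝ)
  (W₀ : Fin d₂ → Fin d₁ → ℝ)

/-- `δ = D₁ W₂ᵀ D₂ v`, with `D₁`, `D₂` the diagonal matrices of `relu` slopes of the hidden
and output units at `W₀`. -/
noncomputable def backpropDelta (j : Fin d₂) : ℝ :=
  reluDeriv (∑ l, W₀ j l * x l) *
    ∑ i, v i * reluDeriv (∑ k, W₂ i k * relu (∑ l, W₀ k l * x l)) * W₂ i j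

theorem threeLayerNet_eventuallyEq_matrixPairing
    (h₁ : ∀ j, (∑ l, W₀ j l * x l) ≠ 0)
    (h₂ : ∀ i, (∑ j, W₂ i j * relu (∑ l, W₀ j l * x l)) ≠ 0) :
    threeLayerNet x W₂ v =ᶠ[𝓝 W₀]
      matrixPairing (Matrix.vecMulVec (backpropDelta x W₂ v W₀) x) := by
  have hidden : ∀ᶠ W in 𝓝 W₀, ∀ j,
      relu (∑ l, W j l * x l) = reluDeriv (∑ l, W₀ j l * x l) * ∑ l, W j l * x l :=
    eventually_all.2 fun j =>
      relu_comp_eventuallyEq (Continuous.continuousAt (by fun_prop)) (h₁ j)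
  have output : ∀ᶠ W in 𝓝 W₀, ∀ i,
      relu (∑ j, W₂ i j * relu (∑ l, W j l * x l)) =
        reluDeriv (∑ j, W₂ i j * relu (∑ l, W₀ j l * x l)) *
          ∑ j, W₂ i j * relu (∑ l, W j l * x l) :=
    eventually_all.2 fun i =>
      relu_comp_eventuallyEq (Continuous.continuousAt (by fun_prop)) (h₂ i)
  filter_upwards [hidden, output] with W hW_hidden hW_output
  simp only [threeLayerNet, hW_output]
  simp only [hW_hidden, matrixPairing_apply, Matrix.vecMulVec_apply, backpropDelta,
    Finset.mul_sum, Finset.sum_mul]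
  rw [Finset.sum_comm]
  refine Finset.sum_congr rfl fun j _ => ?_
  rw [Finset.sum_comm]
  exact Finset.sum_congr rfl fun l _ => Finset.sum_congr rfl fun i _ => by ring

end Network

/-- For the three-layer ReLU network output
`f(W) = ⟨v, relu(W₂ · relu(W x))⟩` in the first-layer weights, if `(W₀ x)_j ≠ 0` for
every `j` and `(W₂ · relu(W₀ x))_i ≠ 0` for every `i`, then `f` is differentiable at `W₀`
and its gradient matrix has rank at most 1. -/
theorem stmt10 {d₁ d₂ d₃ : ℕ} (x : Fin d₁ → ℝ) (W₂ : Matrix (Fin d₃) (Fin d₂) ℝ)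
    (v : Fin d₃ → ℝ) (W₀ : Fin d₂ → Fin d₁ → ℝ)
    (h₁ : ∀ j, (∑ l, W₀ j l * x l) ≠ 0)
    (h₂ : ∀ i, (∑ j, W₂ i j * relu (∑ l, W₀ j l * x l)) ≠ 0) :
    DifferentiableAt ℝ
      (fun W : Fin d₂ → Fin d₁ → ℝ =>
        ∑ i, v i * relu (∑ j, W₂ i j * relu (∑ l, W j l * x l))) W₀ ∧
    (gradMatrix
        (fun W => ∑ i, v i * relu (∑ j, W₂ i j * relu (∑ l, W j l * x l))) W₀).rank
      ≤ 1 := by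
  have hf : HasFDerivAt (threeLayerNet x W₂ v)
      (matrixPairing (Matrix.vecMulVec (backpropDelta x W₂ v W₀) x)) W₀ :=
    (matrixPairing _).hasFDerivAt.congr_of_eventuallyEq
      (threeLayerNet_eventuallyEq_matrixPairing x W₂ v W₀ h₁ h₂)
  refine ⟨hf.differentiableAt, ?_⟩
  change (gradMatrix (threeLayerNet x W₂ v) W₀).rank ≤ 1
  rw [gradMatrix_eq_of_hasFDerivAt hf]
  exact Matrix.rank_vecMulVec_le _ _
end

section
/- Fix x ∈ ℝᵐ with x ≠ 0 and v ∈ ℝⁿ, and define f : ℝ^{n×m} → ℝ by f(W) = ⟨v, relu(W x)⟩. Then for Lebesgue-almost every n×m real matrix W, the function f is differentiable at W and its gradient matrix satisfies rank(∇f(W)) ≤ 1. -/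
/-- The linear functional `W ↦ ∑ j, W i j * x j`. -/
noncomputable def phiL {n m : ℕ} (x : Fin m → ℝ) (i : Fin n) :
    (Fin n → Fin m → ℝ) →ₗ[ℝ] ℝ where
  toFun W := ∑ j, W i j * x j
  map_add' W W' := by simp [add_mul, Finset.sum_add_distrib]
  map_smul' c W := by simp [Finset.mul_sum, mul_assoc]

noncomputable def phiC {n m : ℕ} (x : Fin m → ℝ) (i : Fin n) :
    (Fin n → Fin m → ℝ) →L[ℝ] ℝ :=
  LinearMap.toContinuousLinearMap (phiL x i)

lemma relu_hasDerivAt {t : ℝ} (ht : t ≠ 0) :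
    HasDerivAt relu (if 0 < t then 1 else 0) t := by
  rcases ht.lt_or_gt with h | h
  · rw [if_neg (not_lt.2 h.le)]
    have he : relu =ᶠ[nhds t] fun _ => (0 : ℝ) := by
      filter_upwards [Iio_mem_nhds h] with z hz
      simp [relu, max_eq_right (le_of_lt (Set.mem_Iio.1 hz))]
    exact (hasDerivAt_const t 0).congr_of_eventuallyEq he
  · rw [if_pos h]
    have he : relu =ᶠ[nhds t] id := by
      filter_upwards [Ioi_mem_nhds h] with z hz
      simp [relu, max_eq_left (le_of_lt (Set.mem_Iio.1 hz))]
    exact (hasDerivAt_id t).congr_of_eventuallyEq he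

lemma rank_vmv_le_one {a b : ℕ} (w : Fin a → ℝ) (u : Fin b → ℝ) :
    (Matrix.vecMulVec w u).rank ≤ 1 := by
  rw [Matrix.vecMulVec_eq (Fin 1)]
  exact (Matrix.rank_mul_le_left _ _).trans
    ((Matrix.rank_le_card_width _).trans_eq (by simp))

/-- For fixed `x ≠ 0` and `v`, and `f(W) = ⟨v, relu(W x)⟩`, for
Lebesgue-almost every n×m real matrix `W`, `f` is differentiable at `W` and its gradient
matrix has rank at most 1. -/
theorem stmt12 {n m : ℕ} (x : Fin m → ℝ) (hx : x ≠ 0) (v : Fin n → ℝ) :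
    ∀ᵐ W : Fin n → Fin m → ℝ ∂MeasureTheory.volume,
      DifferentiableAt ℝ
        (fun W' : Fin n → Fin m → ℝ => ∑ i, v i * relu (∑ j, W' i j * x j)) W ∧
      (gradMatrix (fun W' => ∑ i, v i * relu (∑ j, W' i j * x j)) W).rank ≤ 1 := by
  obtain ⟨j0, hj0⟩ := Function.ne_iff.1 hx
  -- a.e., all rows pair nondegenerately with x
  have hae : ∀ᵐ W : Fin n → Fin m → ℝ ∂MeasureTheory.volume,
      ∀ i, ∑ j, W i j * x j ≠ 0 := by
    rw [MeasureTheory.ae_all_iff]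
    intro i
    have hker : LinearMap.ker (phiL x i) ≠ ⊤ := by
      intro h
      have h1 : phiL x i (fun _ j' => if j' = j0 then 1 else 0) = 0 := by
        rw [← LinearMap.mem_ker, h]; trivial
      simp [phiL] at h1
      exact hj0 h1
    have h0 : MeasureTheory.volume
        (LinearMap.ker (phiL x i) : Set (Fin n → Fin m → ℝ)) = 0 :=
      MeasureTheory.Measure.addHaar_submodule _ _ hker
    rw [MeasureTheory.ae_iff]
    convert h0 using 2
    ext W
    simp [phiL]
  filter_upwards [hae] with W hW
  set r : Fin n → ℝ := fun i => if 0 < ∑ j, W i j * x j then 1 else 0 with hr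
  have hder : HasFDerivAt
      (fun W' : Fin n → Fin m → ℝ => ∑ i, v i * relu (∑ j, W' i j * x j))
      (∑ i, (v i * r i) • phiC x i) W := by
    apply HasFDerivAt.fun_sum
    intro i _
    have h1 : HasFDerivAt (fun W' : Fin n → Fin m → ℝ => relu (∑ j, W' i j * x j))
        (r i • phiC x i) W := by
      have := (relu_hasDerivAt (hW i)).comp_hasFDerivAt W ((phiC x i).hasFDerivAt)
      simpa [phiC, phiL, hr, Function.comp_def] using this
    have := h1.const_mul (v i)
    simpa [smul_smul, mul_comm] using this
  have hfd : fderiv ℝ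
      (fun W' : Fin n → Fin m → ℝ => ∑ i, v i * relu (∑ j, W' i j * x j)) W
      = ∑ i, (v i * r i) • phiC x i := hder.fderiv
  refine ⟨hder.differentiableAt, ?_⟩
  have hgm : gradMatrix (fun W' => ∑ i, v i * relu (∑ j, W' i j * x j)) W
      = Matrix.vecMulVec (fun i => v i * r i) x := by
    ext i j
    simp only [gradMatrix, Matrix.of_apply, hfd, Matrix.vecMulVec_apply]
    rw [ContinuousLinearMap.sum_apply]
    have : ∀ i', ((v i' * r i') • phiC x i')
        (fun i'' j' => if i'' = i ∧ j' = j then 1 else 0)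
        = if i' = i then v i * r i * x j else 0 := by
      intro i'
      simp only [ContinuousLinearMap.smul_apply, smul_eq_mul]
      by_cases h : i' = i
      · subst h
        simp [phiC, phiL, LinearMap.toContinuousLinearMap]
      · simp [phiC, phiL, LinearMap.toContinuousLinearMap, h]
    rw [Finset.sum_congr rfl fun i' _ => this i']
    simp
  rw [hgm]
  exact rank_vmv_le_one _ _
end

section
/- Fix natural numbers N and B ≥ 1. For each i ∈ {1,…,B}, let φ_i : ℝ → ℝ be differentiable, let a_{i,t} ∈ ℝⁿ and b_{i,t} ∈ ℝᵐ for t ∈ {1,…,N}, let c_i ∈ ℝ, and define f_i : ℝ^{n×m} → ℝ by f_i(W) = Σ_{t=1}^{N} ⟨a_{i,t}, W b_{i,t}⟩ + c_i. Define the mini-batch loss L : ℝ^{n×m} → ℝ by L(W) = (1/B) · Σ_{i=1}^{B} φ_i(f_i(W)). Then L is differentiable everywhere and its gradient matrix at any W₀ satisfies rank(∇L(W₀)) ≤ N·B. -/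
noncomputable def ellLM {n m N : ℕ} (a : Fin N → Fin n → ℝ) (b : Fin N → Fin m → ℝ) :
    (Fin n → Fin m → ℝ) →L[ℝ] ℝ :=
  LinearMap.toContinuousLinearMap
  { toFun := fun V => ∑ t, ∑ p, a t p * ∑ q, V p q * b t q
    map_add' := by
      intro x y
      simp [add_mul, mul_add, Finset.sum_add_distrib]
    map_smul' := by
      intro r x
      simp [Finset.mul_sum, smul_eq_mul, mul_assoc, mul_left_comm, mul_comm] }

theorem ellLM_apply {n m N : ℕ} (a : Fin N → Fin n → ℝ) (b : Fin N → Fin m → ℝ)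
    (V : Fin n → Fin m → ℝ) :
    ellLM a b V = ∑ t, ∑ p, a t p * ∑ q, V p q * b t q := rfl

/-- For the mini-batch loss `L(W) = (1/B)·Σ_{i=1}^{B} φ_i(f_i(W))`, where
each `f_i(W) = Σ_{t=1}^{N} ⟨a_{i,t}, W b_{i,t}⟩ + c_i` and each `φ_i : ℝ → ℝ` is
differentiable, `L` is differentiable everywhere and `rank(∇L(W₀)) ≤ N·B` at every `W₀`. -/
theorem stmt17 {n m N B : ℕ} (hB : 1 ≤ B)
    (φ : Fin B → ℝ → ℝ) (hφ : ∀ i, Differentiable ℝ (φ i))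
    (a : Fin B → Fin N → Fin n → ℝ) (b : Fin B → Fin N → Fin m → ℝ) (c : Fin B → ℝ)
    (f : Fin B → (Fin n → Fin m → ℝ) → ℝ)
    (hf : ∀ i W, f i W = (∑ t, ∑ p, a i t p * ∑ q, W p q * b i t q) + c i)
    (L : (Fin n → Fin m → ℝ) → ℝ)
    (hL : ∀ W, L W = (1 / (B : ℝ)) * ∑ i, φ i (f i W)) :
    Differentiable ℝ L ∧
    ∀ W₀ : Fin n → Fin m → ℝ, (gradMatrix L W₀).rank ≤ N * B := by
  have hfi : ∀ (i) (W₀ : Fin n → Fin m → ℝ), HasFDerivAt (f i) (ellLM (a i) (b i)) W₀ := by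
    intro i W₀
    have h2 := ((ellLM (a i) (b i)).hasFDerivAt (x := W₀)).add_const (c i)
    have e : f i = fun x => ellLM (a i) (b i) x + c i := by
      funext W
      rw [hf i W, ellLM_apply]
    rw [e]; exact h2
  have key : ∀ W₀ : Fin n → Fin m → ℝ, HasFDerivAt L
      (((B : ℝ)⁻¹) • ∑ i, deriv (φ i) (f i W₀) • (ellLM (a i) (b i))) W₀ := by
    intro W₀
    have hsum : HasFDerivAt (fun W => ∑ i, φ i (f i W))
        (∑ i, deriv (φ i) (f i W₀) • (ellLM (a i) (b i))) W₀ := by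
      apply HasFDerivAt.fun_sum
      intro i _
      exact ((hφ i (f i W₀)).hasDerivAt).comp_hasFDerivAt W₀ (hfi i W₀)
    have := hsum.const_smul ((B : ℝ)⁻¹)
    have e : L = ((B : ℝ)⁻¹ • fun W => ∑ i, φ i (f i W)) := by
      funext W
      rw [hL W]
      simp [smul_eq_mul, one_div]
    rw [e]; exact this
  constructor
  · exact fun W₀ => (key W₀).differentiableAt
  · intro W₀
    set d : Fin B → ℝ := fun i => deriv (φ i) (f i W₀) with hd
    have hgrad : ∀ p q, gradMatrix L W₀ p q
        = (B : ℝ)⁻¹ * ∑ i, d i * ∑ t, a i t p * b i t q := by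
      intro p q
      have := (key W₀).fderiv
      simp only [gradMatrix, Matrix.of_apply, this]
      rw [ContinuousLinearMap.smul_apply, ContinuousLinearMap.sum_apply]
      congr 1
      refine Finset.sum_congr rfl fun i _ => ?_
      rw [ContinuousLinearMap.smul_apply, ellLM_apply]
      congr 1
      refine Finset.sum_congr rfl fun t _ => ?_
      rw [Finset.sum_eq_single p, Finset.sum_eq_single q]
      · simp
      · intro q' _ hq'; simp [hq']
      · simp
      · intro p' _ hp'; simp [hp']
      · simp
    set A : Matrix (Fin n) (Fin B × Fin N) ℝ :=
      fun p it => (B : ℝ)⁻¹ * d it.1 * a it.1 it.2 p with hA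
    set K : Matrix (Fin B × Fin N) (Fin m) ℝ := fun it q => b it.1 it.2 q with hK
    have heq : gradMatrix L W₀ = A * K := by
      ext p q
      rw [hgrad p q]
      rw [Matrix.mul_apply]
      simp only [hA, hK]
      rw [Fintype.sum_prod_type]
      rw [Finset.mul_sum]
      refine Finset.sum_congr rfl fun i _ => ?_
      rw [Finset.mul_sum, Finset.mul_sum]
      refine Finset.sum_congr rfl fun t _ => ?_
      ring
    rw [heq]
    calc (A * K).rank ≤ A.rank := Matrix.rank_mul_le_left A K
      _ ≤ Fintype.card (Fin B × Fin N) := Matrix.rank_le_card_width A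
      _ = B * N := by simp
      _ = N * B := Nat.mul_comm B N
end
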